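/- Let x be a fixed vector in R^L and let s^l = x + n^l and s^r = x + n^r where n^l and n^r are zero-mean random vectors, mutually independent, and each independent of x (and of any measurable function of the other sub-signal). Then for any measurable function f: R^{L/2} -> R^{L/2} (applied here with appropriate dimensions), E[||f(s^l) - s^r||^2] = E[||f(s^l) - x||^2] + E[||n^r||^2]. Consequently the minimizer over a parameter family f_theta of E[||f_theta(s^l) - s^r||^2 + ||f_theta(s^r) - s^l||^2] coincides with the minimizer of E[||f_theta(s^l) - x||^2 + ||f_theta(s^r) - x||^2]. -/

import Mathlib

open MeasureTheory RealInnerProductSpace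

lemma n2n_key {Ω : Type*} [MeasurableSpace Ω] {μ : Measure Ω} [IsProbabilityMeasure μ]
    {L : ℕ} {u v : Ω → EuclideanSpace ℝ (Fin L)}
    (hu : MemLp u 2 μ) (hv : MemLp v 2 μ)
    (hind : ProbabilityTheory.IndepFun u v μ) (hv0 : ∫ ω, v ω ∂μ = 0) :
    ∫ ω, ‖u ω - v ω‖ ^ 2 ∂μ = ∫ ω, ‖u ω‖ ^ 2 ∂μ + ∫ ω, ‖v ω‖ ^ 2 ∂μ := by
  have hui : ∀ i, MemLp (fun ω => u ω i) 2 μ := fun i =>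
    (EuclideanSpace.proj (𝕜 := ℝ) i).comp_memLp' hu
  have hvi : ∀ i, MemLp (fun ω => v ω i) 2 μ := fun i =>
    (EuclideanSpace.proj (𝕜 := ℝ) i).comp_memLp' hv
  have hindi : ∀ i : Fin L, ProbabilityTheory.IndepFun (fun ω => u ω i) (fun ω => v ω i) μ :=
    fun i => hind.comp (EuclideanSpace.proj (𝕜 := ℝ) i).measurable
      (EuclideanSpace.proj (𝕜 := ℝ) i).measurable
  have hprod : ∀ i : Fin L, Integrable (fun ω => u ω i * v ω i) μ := fun i =>
    (hindi i).integrable_mul ((hui i).integrable one_le_two) ((hvi i).integrable one_le_two)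
  have hvi0 : ∀ i : Fin L, ∫ ω, v ω i ∂μ = 0 := by
    intro i
    have := (EuclideanSpace.proj (𝕜 := ℝ) i).integral_comp_comm
      (hv.integrable one_le_two)
    simpa [hv0] using this
  have hinner_eq : ∀ ω, (inner ℝ (u ω) (v ω) : ℝ) = ∑ i, u ω i * v ω i := by
    intro ω
    simp [PiLp.inner_apply, RCLike.inner_apply, mul_comm]
  have hinner_int : Integrable (fun ω => (inner ℝ (u ω) (v ω) : ℝ)) μ := by
    have : Integrable (fun ω => ∑ i, u ω i * v ω i) μ :=
      integrable_finset_sum _ fun i _ => hprod i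
    exact this.congr (Filter.Eventually.of_forall fun ω => (hinner_eq ω).symm)
  have hinner0 : ∫ ω, (inner ℝ (u ω) (v ω) : ℝ) ∂μ = 0 := by
    simp_rw [hinner_eq]
    rw [integral_finset_sum _ fun i _ => hprod i]
    refine Finset.sum_eq_zero fun i _ => ?_
    rw [(hindi i).integral_fun_mul_eq_mul_integral (hui i).aestronglyMeasurable (hvi i).aestronglyMeasurable,
      hvi0 i, mul_zero]
  have hu_sq : Integrable (fun ω => ‖u ω‖ ^ 2) μ := hu.norm.integrable_sq
  have hv_sq : Integrable (fun ω => ‖v ω‖ ^ 2) μ := hv.norm.integrable_sq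
  calc ∫ ω, ‖u ω - v ω‖ ^ 2 ∂μ
      = ∫ ω, (‖u ω‖ ^ 2 - 2 * (inner ℝ (u ω) (v ω) : ℝ) + ‖v ω‖ ^ 2) ∂μ := by
        refine integral_congr_ae (Filter.Eventually.of_forall fun ω => ?_)
        exact norm_sub_sq_real _ _
    _ = ∫ ω, ‖u ω‖ ^ 2 ∂μ - 2 * ∫ ω, (inner ℝ (u ω) (v ω) : ℝ) ∂μ + ∫ ω, ‖v ω‖ ^ 2 ∂μ := by
        have h1 : Integrable (fun ω => ‖u ω‖ ^ 2 - 2 * (inner ℝ (u ω) (v ω) : ℝ)) μ :=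
          hu_sq.sub (hinner_int.const_mul 2)
        have h2 : Integrable (fun ω => 2 * (inner ℝ (u ω) (v ω) : ℝ)) μ :=
          hinner_int.const_mul 2
        rw [integral_add h1 hv_sq, integral_sub hu_sq h2, integral_const_mul]
    _ = ∫ ω, ‖u ω‖ ^ 2 ∂μ + ∫ ω, ‖v ω‖ ^ 2 ∂μ := by rw [hinner0]; ring

lemma n2n_shift {Ω : Type*} [MeasurableSpace Ω] {μ : Measure Ω} [IsProbabilityMeasure μ]
    {L : ℕ} (x : EuclideanSpace ℝ (Fin L)) {nl nr : Ω → EuclideanSpace ℝ (Fin L)}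
    (hnr2 : MemLp nr 2 μ) (hnr0 : ∫ ω, nr ω ∂μ = 0)
    (hindep : ProbabilityTheory.IndepFun nl nr μ)
    (f : EuclideanSpace ℝ (Fin L) → EuclideanSpace ℝ (Fin L)) (hf : Measurable f)
    (hfl2 : MemLp (fun ω => f (x + nl ω)) 2 μ) :
    ∫ ω, ‖f (x + nl ω) - (x + nr ω)‖ ^ 2 ∂μ
      = ∫ ω, ‖f (x + nl ω) - x‖ ^ 2 ∂μ + ∫ ω, ‖nr ω‖ ^ 2 ∂μ := by
  have hφ : Measurable fun y : EuclideanSpace ℝ (Fin L) => f (x + y) - x :=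
    (hf.comp (measurable_const.add measurable_id)).sub measurable_const
  have hind : ProbabilityTheory.IndepFun (fun ω => f (x + nl ω) - x) nr μ :=
    hindep.comp hφ measurable_id
  have hu : MemLp (fun ω => f (x + nl ω) - x) 2 μ := hfl2.sub (memLp_const x)
  have := n2n_key hu hnr2 hind hnr0
  simpa [sub_add_eq_sub_sub] using this

/-- Noise2Noise loss equivalence, fixed clean signal.
`x` is a fixed vector, `sˡ = x + nˡ`, `sʳ = x + nʳ` with `nˡ, nʳ` zero-mean, mutually
independent noise. Then the self-supervised loss shifts by a constant, and the minimizers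
of the symmetric self-supervised loss over a parametric family coincide with minimizers
of the supervised loss. -/
theorem noise2noise_fixed_signal
    {Ω : Type*} [MeasurableSpace Ω] {μ : Measure Ω} [IsProbabilityMeasure μ]
    {L : ℕ} (x : EuclideanSpace ℝ (Fin L))
    (nl nr : Ω → EuclideanSpace ℝ (Fin L))
    (hnl2 : MemLp nl 2 μ) (hnr2 : MemLp nr 2 μ)
    (hnl0 : ∫ ω, nl ω ∂μ = 0) (hnr0 : ∫ ω, nr ω ∂μ = 0)
    (hindep : ProbabilityTheory.IndepFun nl nr μ)
    -- Part 1: the loss-shift identity for a single measurable `f`.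
    (f : EuclideanSpace ℝ (Fin L) → EuclideanSpace ℝ (Fin L)) (hf : Measurable f)
    (hfl2 : MemLp (fun ω => f (x + nl ω)) 2 μ) :
    (∫ ω, ‖f (x + nl ω) - (x + nr ω)‖ ^ 2 ∂μ
        = ∫ ω, ‖f (x + nl ω) - x‖ ^ 2 ∂μ + ∫ ω, ‖nr ω‖ ^ 2 ∂μ)
    ∧
    -- Part 2: consequently, minimizers of the symmetric self-supervised loss over any
    -- parametric family coincide with minimizers of the supervised loss.
    (∀ {Θ : Type*} (F : Θ → EuclideanSpace ℝ (Fin L) → EuclideanSpace ℝ (Fin L)),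
      (∀ θ, Measurable (F θ)) →
      (∀ θ, MemLp (fun ω => F θ (x + nl ω)) 2 μ) →
      (∀ θ, MemLp (fun ω => F θ (x + nr ω)) 2 μ) →
      ∀ θstar : Θ,
        ((∀ θ, (∫ ω, ‖F θstar (x + nl ω) - (x + nr ω)‖ ^ 2 ∂μ
                  + ∫ ω, ‖F θstar (x + nr ω) - (x + nl ω)‖ ^ 2 ∂μ)
                ≤ ∫ ω, ‖F θ (x + nl ω) - (x + nr ω)‖ ^ 2 ∂μ
                  + ∫ ω, ‖F θ (x + nr ω) - (x + nl ω)‖ ^ 2 ∂μ)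
          ↔
          (∀ θ, (∫ ω, ‖F θstar (x + nl ω) - x‖ ^ 2 ∂μ
                  + ∫ ω, ‖F θstar (x + nr ω) - x‖ ^ 2 ∂μ)
                ≤ ∫ ω, ‖F θ (x + nl ω) - x‖ ^ 2 ∂μ
                  + ∫ ω, ‖F θ (x + nr ω) - x‖ ^ 2 ∂μ))) := by
  refine ⟨n2n_shift x hnr2 hnr0 hindep f hf hfl2, ?_⟩
  intro Θ F hFm hFl2 hFr2 θstar
  have e1 : ∀ θ, ∫ ω, ‖F θ (x + nl ω) - (x + nr ω)‖ ^ 2 ∂μ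
      = ∫ ω, ‖F θ (x + nl ω) - x‖ ^ 2 ∂μ + ∫ ω, ‖nr ω‖ ^ 2 ∂μ :=
    fun θ => n2n_shift x hnr2 hnr0 hindep (F θ) (hFm θ) (hFl2 θ)
  have e2 : ∀ θ, ∫ ω, ‖F θ (x + nr ω) - (x + nl ω)‖ ^ 2 ∂μ
      = ∫ ω, ‖F θ (x + nr ω) - x‖ ^ 2 ∂μ + ∫ ω, ‖nl ω‖ ^ 2 ∂μ :=
    fun θ => n2n_shift x hnl2 hnl0 hindep.symm (F θ) (hFm θ) (hFr2 θ)
  constructor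
  · intro h θ
    have := h θ
    rw [e1 θ, e2 θ, e1 θstar, e2 θstar] at this
    linarith
  · intro h θ
    have := h θ
    rw [e1 θ, e2 θ, e1 θstar, e2 θstar]
    linarith
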